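/- Let H be a finite-dimensional complex Hilbert space, let A, B ∈ B(H) be invertible, and let V be an operator in B(H) such that |⟨Vx, y⟩| ≤ ‖Ax‖·‖By‖ for all x, y ∈ H. Then for every operator T ∈ B(H) one has |Tr(VT)| ≤ ‖ATB*‖₁. -/

import Mathlib

/-!
Put `C = (B⁻¹)* V A⁻¹`; the hypothesis on `V` says exactly that `‖C‖ ≤ 1`, and cyclicity of the
trace gives `Tr(VT) = Tr(B* C A T) = Tr(C · ATB*)`. For a contraction `C` and any `S`, evaluate
the trace in an orthonormal eigenbasis `(eᵢ)` of `|S| = (S*S)^{1/2}`: since `‖S x‖ = ‖|S| x‖`,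
`|Tr(CS)| ≤ ∑ ‖C S eᵢ‖ ≤ ∑ ‖S eᵢ‖ = ∑ λᵢ = ‖S‖₁`.
-/

open ContinuousLinearMap

/-- The trace-class norm `‖S‖₁ = Tr((S*S)^{1/2})`. -/
noncomputable def traceNorm {H : Type*} [NormedAddCommGroup H] [InnerProductSpace ℂ H]
    [FiniteDimensional ℂ H] (S : H →L[ℂ] H) : ℝ :=
  (LinearMap.trace ℂ H (CFC.sqrt (adjoint S * S) : H →L[ℂ] H).toLinearMap).re

open scoped InnerProductSpace

namespace ContinuousLinearMap

theorem opNorm_le_of_norm_inner_le {𝕜 E F : Type*} [RCLike 𝕜] [NormedAddCommGroup E]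
    [InnerProductSpace 𝕜 E] [NormedAddCommGroup F] [InnerProductSpace 𝕜 F]
    {T : E →L[𝕜] F} {C : ℝ} (hC : 0 ≤ C) (h : ∀ x y, ‖⟪T x, y⟫_𝕜‖ ≤ C * ‖x‖ * ‖y‖) :
    ‖T‖ ≤ C :=
  opNorm_le_of_re_inner_le hC fun x y hx hy ↦
    (RCLike.re_le_norm _).trans (by simpa [hx, hy] using h x y)

theorem norm_cfcAbs_apply {H : Type*} [NormedAddCommGroup H] [InnerProductSpace ℂ H]
    [CompleteSpace H] (S : H →L[ℂ] H) (x : H) : ‖CFC.abs S x‖ = ‖S x‖ := by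
  have hsa : IsSelfAdjoint (CFC.abs S) := (CFC.abs_nonneg S).isSelfAdjoint
  have hsq : ‖CFC.abs S x‖ ^ 2 = ‖S x‖ ^ 2 := by
    rw [@norm_sq_eq_re_inner ℂ, @norm_sq_eq_re_inner ℂ, ← adjoint_inner_right,
      ← adjoint_inner_right, ← star_eq_adjoint, ← star_eq_adjoint, hsa.star_eq]
    congr 2
    exact congr($(CFC.abs_mul_abs S) x)
  exact (sq_eq_sq₀ (norm_nonneg _) (norm_nonneg _)).mp hsq

end ContinuousLinearMap

section traceNorm

variable {H : Type*} [NormedAddCommGroup H] [InnerProductSpace ℂ H] [FiniteDimensional ℂ H]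

theorem exists_orthonormalBasis_traceNorm_eq_sum_norm (S : H →L[ℂ] H) :
    ∃ b : OrthonormalBasis (Fin (Module.finrank ℂ H)) ℂ H, traceNorm S = ∑ i, ‖S (b i)‖ := by
  have hP : (CFC.abs S).IsPositive := (nonneg_iff_isPositive _).mp (CFC.abs_nonneg S)
  refine ⟨hP.isSymmetric.eigenvectorBasis rfl,
    (hP.isSymmetric.re_trace_eq_sum_eigenvalues rfl).trans (Finset.sum_congr rfl fun i _ ↦ ?_)⟩
  rw [← norm_cfcAbs_apply, ← coe_coe, hP.isSymmetric.apply_eigenvectorBasis, norm_smul,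
    OrthonormalBasis.norm_eq_one, mul_one, RCLike.norm_ofReal,
    abs_of_nonneg (hP.toLinearMap.nonneg_eigenvalues rfl i)]

theorem traceNorm_nonneg (S : H →L[ℂ] H) : 0 ≤ traceNorm S := by
  obtain ⟨b, hb⟩ := exists_orthonormalBasis_traceNorm_eq_sum_norm S
  exact hb ▸ Finset.sum_nonneg fun i _ ↦ norm_nonneg _

theorem norm_trace_mul_le_opNorm_mul_traceNorm (C S : H →L[ℂ] H) :
    ‖LinearMap.trace ℂ H (C * S).toLinearMap‖ ≤ ‖C‖ * traceNorm S := by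
  obtain ⟨b, hb⟩ := exists_orthonormalBasis_traceNorm_eq_sum_norm S
  rw [LinearMap.trace_eq_sum_inner _ b, hb, Finset.mul_sum]
  refine norm_sum_le_of_le _ fun i _ ↦ ?_
  calc ‖⟪b i, C (S (b i))⟫_ℂ‖ ≤ ‖b i‖ * ‖C (S (b i))‖ := norm_inner_le_norm _ _
    _ ≤ ‖C‖ * ‖S (b i)‖ := by rw [b.norm_eq_one, one_mul]; exact C.le_opNorm _

end traceNorm

theorem abs_trace_le_traceNorm
    {H : Type*} [NormedAddCommGroup H] [InnerProductSpace ℂ H] [FiniteDimensional ℂ H]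
    (A B V : H →L[ℂ] H) (hA : IsUnit A) (hB : IsUnit B)
    (hV : ∀ x y : H, ‖(inner ℂ (V x) y : ℂ)‖ ≤ ‖A x‖ * ‖B y‖)
    (T : H →L[ℂ] H) :
    ‖LinearMap.trace ℂ H ((V * T) : H →L[ℂ] H).toLinearMap‖ ≤
      traceNorm (A * T * adjoint B) := by
  obtain ⟨a, rfl⟩ := hA
  obtain ⟨b, rfl⟩ := hB
  set C : H →L[ℂ] H := adjoint (↑b⁻¹ : H →L[ℂ] H) * V * ↑a⁻¹
  have ha (x : H) : (a : H →L[ℂ] H) ((↑a⁻¹ : H →L[ℂ] H) x) = x := congr($(a.mul_inv) x)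
  have hb (y : H) : (b : H →L[ℂ] H) ((↑b⁻¹ : H →L[ℂ] H) y) = y := congr($(b.mul_inv) y)
  have hC : ‖C‖ ≤ 1 := opNorm_le_of_norm_inner_le zero_le_one fun x y ↦ by
    simpa [C, adjoint_inner_left, ha, hb] using
      hV ((↑a⁻¹ : H →L[ℂ] H) x) ((↑b⁻¹ : H →L[ℂ] H) y)
  have hVC : V = adjoint (b : H →L[ℂ] H) * C * a := by
    have hb' : adjoint (b : H →L[ℂ] H) * adjoint (↑b⁻¹ : H →L[ℂ] H) = 1 := by
      rw [← star_eq_adjoint, ← star_eq_adjoint, ← star_mul, Units.inv_mul, star_one]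
    calc V = adjoint (b : H →L[ℂ] H) * adjoint (↑b⁻¹ : H →L[ℂ] H) * V * (↑a⁻¹ * a) := by
          rw [hb', a.inv_mul, one_mul, mul_one]
      _ = adjoint (b : H →L[ℂ] H) * C * a := by simp only [C, mul_assoc]
  have htrace : LinearMap.trace ℂ H (V * T).toLinearMap =
      LinearMap.trace ℂ H (C * (a * T * adjoint (b : H →L[ℂ] H))).toLinearMap := by
    rw [hVC, mul_assoc, mul_assoc, toLinearMap_mul, LinearMap.trace_mul_comm]
    simp only [← toLinearMap_mul, mul_assoc]
  calc _ = _ := congrArg norm htrace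
    _ ≤ ‖C‖ * traceNorm _ := norm_trace_mul_le_opNorm_mul_traceNorm _ _
    _ ≤ _ := mul_le_of_le_one_left (traceNorm_nonneg _) hC
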